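/- arXiv:2209.12011 — 3 statements merged into one kernel-verified Lean document; each statement's English description precedes it below -/
import Mathlib

section
/- For every positive integer n, the average number of divisors satisfies the two-sided estimate H_n − 1 < (d(1) + d(2) + … + d(n))/n ≤ H_n, where H_n = 1 + 1/2 + 1/3 + … + 1/n is the n-th harmonic number. -/
/-!
Counting the pairs `(j, m)` with `j * m ≤ n` by `j` gives `∑_{k ≤ n} d(k) = ∑_{j ≤ n} ⌊n / j⌋`,
and each term satisfies `n / j - 1 < ⌊n / j⌋ ≤ n / j`; summing over `j ≤ n` loses less than `n`.
-/

open Finset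

lemma sum_Icc_card_divisors_eq_sum_div (n : ℕ) :
    ∑ k ∈ Icc 1 n, ((Nat.divisors k).card : ℝ) = ∑ j ∈ Icc 1 n, ((n / j : ℕ) : ℝ) := by
  have h := ArithmeticFunction.sum_Ioc_sigma0_eq_sum_div n
  rw [← Icc_add_one_left_eq_Ioc, zero_add] at h
  simp only [ArithmeticFunction.sigma_zero_apply] at h
  exact_mod_cast h

lemma sub_one_lt_cast_div (n j : ℕ) : (n : ℝ) / j - 1 < ((n / j : ℕ) : ℝ) := by
  simpa only [Nat.floor_div_eq_div] using Nat.sub_one_lt_floor ((n : ℝ) / j)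

lemma sum_Icc_cast_div_le (n : ℕ) :
    ∑ j ∈ Icc 1 n, ((n / j : ℕ) : ℝ) ≤ n * ∑ j ∈ Icc 1 n, (1 : ℝ) / j := by
  rw [mul_sum]
  gcongr with j
  simpa only [mul_one_div] using Nat.cast_div_le

lemma mul_sum_Icc_sub_lt_sum_cast_div {n : ℕ} (hn : 0 < n) :
    n * ∑ j ∈ Icc 1 n, (1 : ℝ) / j - n < ∑ j ∈ Icc 1 n, ((n / j : ℕ) : ℝ) := by
  have hcard : ((Icc 1 n).card : ℝ) = n := by simp
  calc n * ∑ j ∈ Icc 1 n, (1 : ℝ) / j - n = ∑ j ∈ Icc 1 n, ((n : ℝ) / j - 1) := by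
        rw [sum_sub_distrib, mul_sum, sum_const, nsmul_one, hcard]
        simp only [mul_one_div]
    _ < ∑ j ∈ Icc 1 n, ((n / j : ℕ) : ℝ) :=
        sum_lt_sum_of_nonempty (nonempty_Icc.mpr hn) fun j _ => sub_one_lt_cast_div n j

theorem avg_divisor_two_sided (n : ℕ) (hn : 0 < n) :
    (∑ k ∈ Finset.Icc 1 n, (1 : ℝ) / k) - 1 <
      (∑ k ∈ Finset.Icc 1 n, ((Nat.divisors k).card : ℝ)) / n ∧
    (∑ k ∈ Finset.Icc 1 n, ((Nat.divisors k).card : ℝ)) / n ≤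
      ∑ k ∈ Finset.Icc 1 n, (1 : ℝ) / k := by
  have hn' : (0 : ℝ) < n := by exact_mod_cast hn
  rw [sum_Icc_card_divisors_eq_sum_div, lt_div_iff₀ hn', div_le_iff₀ hn', sub_mul, one_mul,
    mul_comm _ (n : ℝ)]
  exact ⟨mul_sum_Icc_sub_lt_sum_cast_div hn, sum_Icc_cast_div_le n⟩
end

section
/- Let 0 < m < n be integers and let X = f_{2m+1} + f_{2m+3} + … + f_{2n+1} be the sum of the odd-indexed Fibonacci numbers from f_{2m+1} to f_{2n+1}. Then X = f_{2n+2} − f_{2m}, and f_{2n+1} < X < f_{2n+2}; consequently X is not a member of the Fibonacci sequence (X ≠ f_j for every index j). -/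
lemma fib_sum_aux (m n : ℕ) (h : m ≤ n) :
    (∑ k ∈ Finset.Icc m n, Nat.fib (2 * k + 1)) + Nat.fib (2 * m) = Nat.fib (2 * n + 2) := by
  induction n with
  | zero =>
    interval_cases m
    simp
  | succ n ih =>
    rcases Nat.lt_or_ge m (n + 1) with h' | h'
    · have hmn : m ≤ n := Nat.lt_succ_iff.mp h'
      rw [Finset.sum_Icc_succ_top (by omega : m ≤ n + 1)]
      have := ih hmn
      have e1 : 2 * (n + 1) + 2 = (2 * n + 2) + 2 := by ring
      have e2 : 2 * (n + 1) + 1 = (2 * n + 2) + 1 := by ring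
      rw [e1, e2]
      have hA := Nat.fib_add_two (n := 2 * n + 2)
      have hB := Nat.fib_add_two (n := 2 * n + 1)
      have hC := Nat.fib_add_two (n := 2 * n)
      have eC : Nat.fib (2 * n + 1 + 1) = Nat.fib (2 * n + 2) := by norm_num
      have eA : Nat.fib (2 * n + 2 + 1) = Nat.fib (2 * n + 1 + 2) := by norm_num
      omega
    · have : m = n + 1 := le_antisymm h h'
      subst this
      simp [Nat.fib_add_two, show 2 * (n + 1) + 2 = (2 * (n+1)) + 2 from rfl]
      have e2 : 2 * (n + 1) + 1 = (2 * (n+1)) + 1 := rfl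
      omega

theorem odd_index_fib_sum_not_fib (m n : ℕ) (hm : 0 < m) (hmn : m < n) :
    (∑ k ∈ Finset.Icc m n, Nat.fib (2 * k + 1)) = Nat.fib (2 * n + 2) - Nat.fib (2 * m) ∧
    Nat.fib (2 * n + 1) < ∑ k ∈ Finset.Icc m n, Nat.fib (2 * k + 1) ∧
    (∑ k ∈ Finset.Icc m n, Nat.fib (2 * k + 1)) < Nat.fib (2 * n + 2) ∧
    ∀ j : ℕ, (∑ k ∈ Finset.Icc m n, Nat.fib (2 * k + 1)) ≠ Nat.fib j := by
  have key := fib_sum_aux m n hmn.le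
  have hfm : 0 < Nat.fib (2 * m) := Nat.fib_pos.mpr (by omega)
  have hmono : Nat.fib (2 * m) ≤ Nat.fib (2 * n - 2) := Nat.fib_mono (by omega)
  have hlt : Nat.fib (2 * n - 2) < Nat.fib (2 * n) := by
    have h1 : 0 < Nat.fib (2 * n - 1) := Nat.fib_pos.mpr (by omega)
    have h2 := Nat.fib_add_two (n := 2 * n - 2)
    have e1 : Nat.fib (2 * n - 2 + 2) = Nat.fib (2 * n) := by
      rw [show 2 * n - 2 + 2 = 2 * n from by omega]
    have e2 : Nat.fib (2 * n - 2 + 1) = Nat.fib (2 * n - 1) := by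
      rw [show 2 * n - 2 + 1 = 2 * n - 1 from by omega]
    omega
  have hfib2 : Nat.fib (2 * n + 2) = Nat.fib (2 * n) + Nat.fib (2 * n + 1) := Nat.fib_add_two
  refine ⟨by omega, by omega, by omega, ?_⟩
  intro j hj
  rcases Nat.lt_or_ge j (2 * n + 2) with hle | hge
  · have : Nat.fib j ≤ Nat.fib (2 * n + 1) := Nat.fib_mono (by omega)
    omega
  · have : Nat.fib (2 * n + 2) ≤ Nat.fib j := Nat.fib_mono hge
    omega
end

section
/- For every integer n ≥ 1, the infinite series Σ_{L=0}^{∞} C(2L, n−1)/2^{2L+1} converges and its sum equals (1/2)·(1 + (−1)^{n+1}/3^n). (This is the probability that the starting player wins when two players alternately toss a fair coin and the winner is the one who tosses the n-th head overall.) -/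
/-!
The sum is the even part of `∑ⱼ C(j, n-1) / 2^(j+1)`. The full sum and its alternating twin are
negative-binomial series `∑ⱼ C(j, m) rʲ = rᵐ / (1 - r)^(m+1)` at `r = ±1/2`, and the even part
is half their sum.
-/

open Finset

theorem hasSum_choose_mul_pow {𝕜 : Type*} [NormedField 𝕜] [CompleteSpace 𝕜] (m : ℕ) {r : 𝕜}
    (hr : ‖r‖ < 1) :
    HasSum (fun j : ℕ => (j.choose m : 𝕜) * r ^ j) (r ^ m / (1 - r) ^ (m + 1)) := by
  have shifted : HasSum (fun j : ℕ => ((j + m).choose m : 𝕜) * r ^ (j + m))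
      (r ^ m / (1 - r) ^ (m + 1)) := by
    have h := (hasSum_choose_mul_geometric_of_norm_lt_one m hr).mul_left (r ^ m)
    rw [mul_one_div] at h
    exact h.congr_fun fun j => by ring
  rw [hasSum_nat_add_iff (f := fun j : ℕ => (j.choose m : 𝕜) * r ^ j)] at shifted
  have initial_terms_vanish : ∑ i ∈ range m, (i.choose m : 𝕜) * r ^ i = 0 :=
    sum_eq_zero fun i hi => by simp [Nat.choose_eq_zero_of_lt (mem_range.mp hi)]
  simpa [initial_terms_vanish] using shifted

theorem HasSum.even_of_hasSum_neg_one_pow_mul {𝕜 : Type*} [Field 𝕜] [TopologicalSpace 𝕜]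
    [IsTopologicalRing 𝕜] [CharZero 𝕜] {f : ℕ → 𝕜} {s t : 𝕜} (hf : HasSum f s)
    (hf' : HasSum (fun j => (-1) ^ j * f j) t) :
    HasSum (fun k => f (2 * k)) ((s + t) / 2) := by
  have odd_terms_vanish :
      ∀ j ∉ Set.range (fun k : ℕ => 2 * k), (f j + (-1) ^ j * f j) / 2 = 0 := by
    intro j hj
    have hodd : Odd j := by
      rw [← Nat.not_even_iff_odd]
      rintro ⟨k, rfl⟩
      exact hj ⟨k, two_mul k⟩
    simp [hodd.neg_one_pow]
  have double_injective : Function.Injective (fun k : ℕ => 2 * k) :=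
    fun a b h => by simpa using h
  convert (double_injective.hasSum_iff odd_terms_vanish).mpr ((hf.add hf').div_const 2) using 1
  ext k
  simp [pow_mul]

theorem coin_game_nth_head (n : ℕ) (hn : 1 ≤ n) :
    Summable (fun L : ℕ => (Nat.choose (2 * L) (n - 1) : ℝ) / 2 ^ (2 * L + 1)) ∧
    (∑' L : ℕ, (Nat.choose (2 * L) (n - 1) : ℝ) / 2 ^ (2 * L + 1)) =
      (1 / 2) * (1 + (-1 : ℝ) ^ (n + 1) / 3 ^ n) := by
  obtain ⟨m, rfl⟩ : ∃ m, n = m + 1 := ⟨n - 1, by omega⟩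
  have full := hasSum_choose_mul_pow (𝕜 := ℝ) m (r := 1 / 2) (by norm_num)
  have alternating := hasSum_choose_mul_pow (𝕜 := ℝ) m (r := -(1 / 2)) (by norm_num)
  have even := full.even_of_hasSum_neg_one_pow_mul <| alternating.congr_fun fun j => by
    rw [neg_pow (1 / 2 : ℝ) j]; ring
  have value : ((1 / 2 : ℝ) ^ m / (1 - 1 / 2) ^ (m + 1) +
      (-(1 / 2)) ^ m / (1 - -(1 / 2)) ^ (m + 1)) / 2 / 2 =
      1 / 2 * (1 + (-1) ^ (m + 1 + 1) / 3 ^ (m + 1)) := by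
    rw [show (1 : ℝ) - -(1 / 2) = 3 * (1 / 2) by norm_num, neg_pow (1 / 2 : ℝ), mul_pow]
    field_simp
    ring
  have game : HasSum (fun L : ℕ => (Nat.choose (2 * L) m : ℝ) / 2 ^ (2 * L + 1)) _ :=
    (even.div_const 2).congr_fun fun L => by
      rw [pow_succ, one_div, inv_pow]; field_simp
  rw [value] at game
  simpa using And.intro game.summable game.tsum_eq
end
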